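/- Let K be a field of characteristic zero and n ≥ 4. For arbitrary scalars λ_1,…,λ_{n−1}, c_1,…,c_{n−1} ∈ K, the K-linear map D : T(n) → T(n) defined on the standard basis by D(N_{12}) = λ_1 N_{12} + c_1 N_{2n}, D(N_{j(j+1)}) = λ_j N_{j(j+1)} + c_j N_{1n} for 2 ≤ j ≤ n−2, D(N_{(n−1)n}) = λ_{n−1} N_{(n−1)n} + c_{n−1} N_{1(n−1)}, and D(N_{ik}) = (Σ_{p=i}^{k−1} λ_p) N_{ik} for k − i ≥ 2, is a derivation of the Lie algebra T(n). (All the parameters in the canonical form of a structure matrix are free.) -/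

import Mathlib

open Matrix

attribute [local instance 100] LieRing.ofAssociativeRing

/-- The Lie algebra `T(n)` of strictly upper triangular `n × n` matrices over `K`. -/
def strictUpper (n : ℕ) (K : Type*) [Field K] :
    LieSubalgebra K (Matrix (Fin n) (Fin n) K) where
  carrier := {M | ∀ i j : Fin n, j ≤ i → M i j = 0}
  add_mem' := by
    intro a b ha hb i j hij
    simp [Matrix.add_apply, ha i j hij, hb i j hij]
  zero_mem' := by intro i j hij; simp
  smul_mem' := by
    intro c a ha i j hij
    simp [Matrix.smul_apply, ha i j hij]
  lie_mem' := by
    intro a b ha hb i j hij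
    have hmul : ∀ x y : Matrix (Fin n) (Fin n) K,
        (∀ i j : Fin n, j ≤ i → x i j = 0) → (∀ i j : Fin n, j ≤ i → y i j = 0) →
        (x * y) i j = 0 := by
      intro x y hx hy
      rw [Matrix.mul_apply]
      apply Finset.sum_eq_zero
      intro s _
      rcases le_or_gt s i with h | h
      · rw [hx i s h, zero_mul]
      · rw [hy s j (hij.trans h.le), mul_zero]
    rw [Ring.lie_def, Matrix.sub_apply, hmul a b ha hb, hmul b a hb ha, sub_zero]

/-- The standard basis element `N_{ik}` (with `i < k`) of `T(n)`. -/
def stdN {n : ℕ} {K : Type*} [Field K] {i k : Fin n} (h : i < k) :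
    strictUpper n K :=
  ⟨Matrix.single i k 1, by
    intro a b hba
    simp only [Matrix.single, Matrix.of_apply, ite_eq_right_iff, one_ne_zero]
    rintro ⟨rfl, rfl⟩
    exact absurd h (not_lt.mpr hba)⟩

/-- The basis element `N_{ik}` of `T(n)`, indexed by natural numbers (`0`-based). -/
def natN (n : ℕ) (K : Type*) [Field K] (i k : ℕ) (h1 : i < k) (h2 : k < n) :
    strictUpper n K :=
  stdN (i := ⟨i, h1.trans h2⟩) (k := ⟨k, h2⟩) (Fin.mk_lt_mk.mpr h1)

/-!
The derivation is the sum of two derivations. The first is `ad H` for the diagonal matrix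
`H = diag(-∑_{p<a} λ_p)`, which normalizes `T(n)` and scales `N_{ik}` by `∑_{p=i}^{k-1} λ_p`.
The second, `φ`, sends the superdiagonal coordinates of a matrix to the corner elements
`N_{2n}`, `N_{1n}`, `N_{1(n-1)}`. It vanishes on `[T(n), T(n)]`, since superdiagonal entries of
brackets vanish, and `[A, φ B] = (c_1 A_{12} B_{12} - c_{n-1} A_{(n-1)n} B_{(n-1)n}) N_{1n}` is
symmetric in `A` and `B`; for a map vanishing on brackets this is the Leibniz rule.
-/

namespace LieSubalgebra

variable {R L : Type*} [CommRing R] [LieRing L] [LieAlgebra R L]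

def adOfMemNormalizer (H : LieSubalgebra R L) {x : L} (hx : x ∈ H.normalizer) :
    LieDerivation R H H where
  toFun y := ⟨⁅x, (y : L)⁆, (H.mem_normalizer_iff x).1 hx y y.2⟩
  map_add' y z := Subtype.ext (lie_add x (y : L) z)
  map_smul' t y := Subtype.ext (lie_smul t x (y : L))
  leibniz' y z := Subtype.ext <| by
    change ⁅x, ⁅(y : L), (z : L)⁆⁆ = ⁅(y : L), ⁅x, (z : L)⁆⁆ - ⁅(z : L), ⁅x, (y : L)⁆⁆
    rw [leibniz_lie, ← lie_skew (z : L)]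
    abel

@[simp]
lemma coe_adOfMemNormalizer_apply (H : LieSubalgebra R L) {x : L} (hx : x ∈ H.normalizer)
    (y : H) : (H.adOfMemNormalizer hx y : L) = ⁅x, (y : L)⁆ := rfl

end LieSubalgebra

namespace LieDerivation

variable {R L M : Type*} [CommRing R] [LieRing L] [LieAlgebra R L]
    [AddCommGroup M] [Module R M] [LieRingModule L M] [LieModule R L M]

def ofLieEqZero (f : L →ₗ[R] M) (hf : ∀ a b : L, f ⁅a, b⁆ = 0)
    (hsymm : ∀ a b : L, ⁅a, f b⁆ = ⁅b, f a⁆) : LieDerivation R L M where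
  __ := f
  leibniz' a b := by simp [hf, hsymm a b]

@[simp]
lemma ofLieEqZero_apply (f : L →ₗ[R] M) (hf : ∀ a b : L, f ⁅a, b⁆ = 0)
    (hsymm : ∀ a b : L, ⁅a, f b⁆ = ⁅b, f a⁆) (a : L) : ofLieEqZero f hf hsymm a = f a := rfl

end LieDerivation

namespace Matrix

variable {ι R : Type*} [Fintype ι] [DecidableEq ι]

lemma lie_diagonal_apply [CommRing R] (d : ι → R) (A : Matrix ι ι R) (a b : ι) :
    ⁅diagonal d, A⁆ a b = (d a - d b) * A a b := by
  simp only [Ring.lie_def, sub_apply, diagonal_mul, mul_diagonal]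
  ring

lemma lie_single_one_apply [Ring R] (A : Matrix ι ι R) (i k a b : ι) :
    ⁅A, single i k (1 : R)⁆ a b = (if b = k then A a i else 0) - if a = i then A k b else 0 := by
  simp [Ring.lie_def, single, mul_apply, ite_and, eq_comm]

end Matrix

namespace strictUpper

variable {K : Type*} [Field K] {n : ℕ}

lemma apply_mk_eq_zero (A : strictUpper n K) {i j : ℕ} (hi : i < n) (hj : j < n) (h : j ≤ i) :
    (A : Matrix (Fin n) (Fin n) K) ⟨i, hi⟩ ⟨j, hj⟩ = 0 :=
  A.2 _ _ h

lemma coe_natN {i k : ℕ} (h1 : i < k) (h2 : k < n) :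
    (natN n K i k h1 h2 : Matrix (Fin n) (Fin n) K) = single ⟨i, h1.trans h2⟩ ⟨k, h2⟩ 1 := rfl

lemma mul_apply_eq_zero (A B : strictUpper n K) {a b : Fin n} (h : (b : ℕ) ≤ a + 1) :
    ((A : Matrix (Fin n) (Fin n) K) * B) a b = 0 :=
  (mul_apply ..).trans <| Finset.sum_eq_zero fun s _ => by
    rcases le_or_gt s a with hs | hs
    · rw [A.2 a s hs, zero_mul]
    · rw [B.2 s b (by rw [Fin.le_def]; omega), mul_zero]

/-- With `ℕ` indices; the value is `0` when an index is out of range. -/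
def entry (n : ℕ) (K : Type*) [Field K] (i k : ℕ) : strictUpper n K →ₗ[K] K :=
  if h : i < n ∧ k < n then
    entryLinearMap K K (⟨i, h.1⟩ : Fin n) ⟨k, h.2⟩ ∘ₗ (strictUpper n K).toSubmodule.subtype
  else 0

lemma entry_apply {i k : ℕ} (hi : i < n) (hk : k < n) (A : strictUpper n K) :
    entry n K i k A = (A : Matrix (Fin n) (Fin n) K) ⟨i, hi⟩ ⟨k, hk⟩ := by
  rw [entry, dif_pos ⟨hi, hk⟩]
  rfl

lemma entry_natN (a b : ℕ) {i k : ℕ} (h1 : i < k) (h2 : k < n) :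
    entry n K a b (natN n K i k h1 h2) = if i = a ∧ k = b then 1 else 0 := by
  by_cases h : a < n ∧ b < n
  · simp [entry_apply h.1 h.2, coe_natN, single_apply, Fin.ext_iff]
  · rw [entry, dif_neg h, LinearMap.zero_apply, if_neg]
    omega

lemma entry_lie_self_succ (j : ℕ) (A B : strictUpper n K) :
    entry n K j (j + 1) ⁅A, B⁆ = 0 := by
  by_cases h : j + 1 < n
  · rw [entry_apply (by omega) h, LieSubalgebra.coe_bracket, Ring.lie_def, Matrix.sub_apply,
      mul_apply_eq_zero A B le_rfl, mul_apply_eq_zero B A le_rfl, sub_zero]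
  · simp [entry, h]

lemma sum_smul_entry_succ_natN (s : Finset ℕ) (f : ℕ → K) {i k : ℕ} (h1 : i < k) (h2 : k < n) :
    (∑ j ∈ s, f j • entry n K j (j + 1)) (natN n K i k h1 h2) =
      if i ∈ s ∧ k = i + 1 then f i else 0 := by
  simp only [LinearMap.coe_sum, Finset.sum_apply, LinearMap.smul_apply, entry_natN, smul_eq_mul,
    mul_ite, mul_one, mul_zero, ite_and, Finset.sum_ite_eq]

lemma lie_natN_one_last (A : strictUpper n K) (h : 1 < n - 1) :
    ⁅A, natN n K 1 (n - 1) h (by omega)⁆ =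
      entry n K 0 1 A • natN n K 0 (n - 1) (by omega) (by omega) := by
  ext ⟨a, ha⟩ ⟨b, hb⟩
  simp only [LieSubalgebra.coe_bracket, coe_natN, lie_single_one_apply, SetLike.val_smul,
    entry_apply (show 0 < n by omega) (show 1 < n by omega), Matrix.smul_apply, single_apply,
    Fin.ext_iff, apply_mk_eq_zero A _ hb (show b ≤ n - 1 by omega), ite_self, sub_zero]
  rcases eq_or_ne a 0 with rfl | ha0
  · simp [eq_comm]
  · simp [Ne.symm ha0, apply_mk_eq_zero A ha (show 1 < n by omega) (show 1 ≤ a by omega)]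

lemma lie_natN_zero_last (A : strictUpper n K) (h : 0 < n - 1) :
    ⁅A, natN n K 0 (n - 1) h (by omega)⁆ = 0 := by
  ext ⟨a, ha⟩ ⟨b, hb⟩
  simp only [LieSubalgebra.coe_bracket, coe_natN, lie_single_one_apply,
    apply_mk_eq_zero A _ hb (show b ≤ n - 1 by omega), apply_mk_eq_zero A ha _ (Nat.zero_le a),
    ite_self, sub_zero]
  rfl

lemma lie_natN_zero_pred_last (A : strictUpper n K) (h : 0 < n - 2) :
    ⁅A, natN n K 0 (n - 2) h (by omega)⁆ =
      -entry n K (n - 2) (n - 1) A • natN n K 0 (n - 1) (by omega) (by omega) := by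
  ext ⟨a, ha⟩ ⟨b, hb⟩
  simp only [LieSubalgebra.coe_bracket, coe_natN, lie_single_one_apply, SetLike.val_smul,
    entry_apply (show n - 2 < n by omega) (show n - 1 < n by omega), Matrix.smul_apply,
    single_apply, Fin.ext_iff, apply_mk_eq_zero A ha _ (Nat.zero_le a), ite_self, zero_sub]
  rcases eq_or_ne b (n - 1) with rfl | hb1
  · obtain rfl | ha0 := eq_or_ne a 0 <;> simp [eq_comm, *]
  · simp [Ne.symm hb1, apply_mk_eq_zero A (show n - 2 < n by omega) hb (show b ≤ n - 2 by omega)]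

lemma diagonal_mem_normalizer (d : Fin n → K) : diagonal d ∈ (strictUpper n K).normalizer :=
  (LieSubalgebra.mem_normalizer_iff _ _).2 fun A hA i j hij => by
    rw [lie_diagonal_apply, hA i j hij, mul_zero]

lemma lie_diagonal_natN (d : Fin n → K) {i k : ℕ} (h1 : i < k) (h2 : k < n) :
    ⁅diagonal d, (natN n K i k h1 h2 : Matrix (Fin n) (Fin n) K)⁆ =
      (d ⟨i, h1.trans h2⟩ - d ⟨k, h2⟩) • (natN n K i k h1 h2 : Matrix (Fin n) (Fin n) K) := by
  ext a b
  rw [lie_diagonal_apply, Matrix.smul_apply, coe_natN, single_apply]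
  split_ifs with h
  · rw [← h.1, ← h.2, smul_eq_mul]
  · rw [mul_zero, smul_zero]

def superdiagToCorner (hn : 3 ≤ n) (c : ℕ → K) : strictUpper n K →ₗ[K] strictUpper n K :=
  (c 0 • entry n K 0 1).smulRight (natN n K 1 (n - 1) (by omega) (by omega)) +
  (∑ j ∈ Finset.Ico 1 (n - 2), c j • entry n K j (j + 1)).smulRight
    (natN n K 0 (n - 1) (by omega) (by omega)) +
  (c (n - 2) • entry n K (n - 2) (n - 1)).smulRight (natN n K 0 (n - 2) (by omega) (by omega))

lemma superdiagToCorner_lie (hn : 3 ≤ n) (c : ℕ → K) (A B : strictUpper n K) :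
    superdiagToCorner hn c ⁅A, B⁆ = 0 := by
  have hlast : entry n K (n - 2) (n - 1) ⁅A, B⁆ = 0 := by
    rw [show n - 1 = n - 2 + 1 by omega, entry_lie_self_succ]
  simp [superdiagToCorner, entry_lie_self_succ, hlast]

lemma lie_superdiagToCorner_comm (hn : 3 ≤ n) (c : ℕ → K) (A B : strictUpper n K) :
    ⁅A, superdiagToCorner hn c B⁆ = ⁅B, superdiagToCorner hn c A⁆ := by
  simp only [superdiagToCorner, LinearMap.add_apply, LinearMap.smulRight_apply, lie_add, lie_smul,
    lie_natN_one_last _ (show 1 < n - 1 by omega), lie_natN_zero_last _ (show 0 < n - 1 by omega),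
    lie_natN_zero_pred_last _ (show 0 < n - 2 by omega), LinearMap.smul_apply, smul_zero,
    smul_eq_mul]
  module

lemma superdiagToCorner_natN (hn : 3 ≤ n) (c : ℕ → K) {i k : ℕ} (h1 : i < k) (h2 : k < n) :
    superdiagToCorner hn c (natN n K i k h1 h2) =
      (if i = 0 ∧ k = 1 then c 0 else 0) • natN n K 1 (n - 1) (by omega) (by omega) +
      (if (1 ≤ i ∧ i < n - 2) ∧ k = i + 1 then c i else 0) •
        natN n K 0 (n - 1) (by omega) (by omega) +
      (if i = n - 2 ∧ k = n - 1 then c (n - 2) else 0) •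
        natN n K 0 (n - 2) (by omega) (by omega) := by
  simp only [superdiagToCorner, LinearMap.add_apply, LinearMap.smulRight_apply,
    sum_smul_entry_succ_natN, LinearMap.smul_apply, entry_natN, Finset.mem_Ico, smul_eq_mul,
    mul_ite, mul_one, mul_zero]

def canonicalDerivation (hn : 3 ≤ n) (lam c : ℕ → K) :
    LieDerivation K (strictUpper n K) (strictUpper n K) :=
  (strictUpper n K).adOfMemNormalizer
      (diagonal_mem_normalizer fun a => -∑ p ∈ Finset.range a, lam p) +
    .ofLieEqZero (superdiagToCorner hn c) (superdiagToCorner_lie hn c)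
      (lie_superdiagToCorner_comm hn c)

lemma canonicalDerivation_natN (hn : 3 ≤ n) (lam c : ℕ → K) {i k : ℕ} (h1 : i < k)
    (h2 : k < n) :
    canonicalDerivation hn lam c (natN n K i k h1 h2) =
      (∑ p ∈ Finset.Ico i k, lam p) • natN n K i k h1 h2 +
        superdiagToCorner hn c (natN n K i k h1 h2) := by
  rw [canonicalDerivation, LieDerivation.add_apply, LieDerivation.ofLieEqZero_apply]
  congr 1
  ext : 1
  rw [LieSubalgebra.coe_adOfMemNormalizer_apply, lie_diagonal_natN, SetLike.val_smul,
    Finset.sum_Ico_eq_sub _ h1.le, neg_sub_neg]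

end strictUpper

theorem canonical_form_is_derivation
    (K : Type*) [Field K] (n : ℕ) (hn : 4 ≤ n)
    (lam c : ℕ → K) :
    ∃ D : LieDerivation K (strictUpper n K) (strictUpper n K),
      (D (natN n K 0 1 (by omega) (by omega)) =
        lam 0 • natN n K 0 1 (by omega) (by omega) +
          c 0 • natN n K 1 (n - 1) (by omega) (by omega)) ∧
      (∀ (j : ℕ) (hj1 : 1 ≤ j) (hj2 : j ≤ n - 3),
        D (natN n K j (j + 1) (by omega) (by omega)) =
          lam j • natN n K j (j + 1) (by omega) (by omega) +
            c j • natN n K 0 (n - 1) (by omega) (by omega)) ∧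
      (D (natN n K (n - 2) (n - 1) (by omega) (by omega)) =
        lam (n - 2) • natN n K (n - 2) (n - 1) (by omega) (by omega) +
          c (n - 2) • natN n K 0 (n - 2) (by omega) (by omega)) ∧
      (∀ (i k : ℕ) (hik : i + 2 ≤ k) (hk : k < n),
        D (natN n K i k (by omega) hk) =
          (∑ p ∈ Finset.Ico i k, lam p) • natN n K i k (by omega) hk) := by
  have hIco : Finset.Ico (n - 2) (n - 1) = {n - 2} := by
    rw [show n - 1 = n - 2 + 1 by omega, Nat.Ico_succ_singleton]
  refine ⟨strictUpper.canonicalDerivation (by omega) lam c, ?_, ?_, ?_, ?_⟩ <;>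
  · intros
    rw [strictUpper.canonicalDerivation_natN, strictUpper.superdiagToCorner_natN]
    split_ifs <;> first | omega | simp [hIco]
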